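/- Let k ≥ 2 and let G be a connected graph of order n ≥ 2k + 1 containing a vertex u of degree d with k ≤ d ≤ n − k − 1. Then η_p(G) ≤ n − k. -/
import Mathlib


open SimpleGraph Set

/-- Distance from a vertex to a set of vertices. -/
noncomputable def pDist {V : Type*} (G : SimpleGraph V) (v : V) (S : Set V) : ℕ :=
  sInf (G.dist v '' S)

/-- A family of sets of vertices is resolving if every pair of distinct vertices
is distinguished by its distance to some part. -/
def IsResolvingFam {V : Type*} (G : SimpleGraph V) (P : Set (Set V)) : Prop :=
  ∀ u v : V, u ≠ v → ∃ S ∈ P, pDist G u S ≠ pDist G v S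

/-- A family of sets is dominating if every vertex is at distance exactly 1 from some part. -/
def IsDominatingFam {V : Type*} (G : SimpleGraph V) (P : Set (Set V)) : Prop :=
  ∀ v : V, ∃ S ∈ P, pDist G v S = 1

/-- The partition domination number: minimum cardinality of a dominating partition. -/
noncomputable def gammaP {V : Type*} (G : SimpleGraph V) : ℕ :=
  sInf {k | ∃ P : Set (Set V), Setoid.IsPartition P ∧ IsDominatingFam G P ∧ P.ncard = k}

/-- The partition dimension: minimum cardinality of a resolving partition. -/
noncomputable def betaP {V : Type*} (G : SimpleGraph V) : ℕ :=
  sInf {k | ∃ P : Set (Set V), Setoid.IsPartition P ∧ IsResolvingFam G P ∧ P.ncard = k}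

/-- The dominating partition dimension: minimum cardinality of a resolving dominating partition. -/
noncomputable def etaP {V : Type*} (G : SimpleGraph V) : ℕ :=
  sInf {k | ∃ P : Set (Set V), Setoid.IsPartition P ∧ IsResolvingFam G P ∧
    IsDominatingFam G P ∧ P.ncard = k}

/-- A resolving set of vertices. -/
def IsResolvingSet {V : Type*} (G : SimpleGraph V) (S : Set V) : Prop :=
  ∀ u v : V, u ≠ v → ∃ x ∈ S, G.dist u x ≠ G.dist v x

/-- A dominating set of vertices. -/
def IsDominatingSet {V : Type*} (G : SimpleGraph V) (S : Set V) : Prop :=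
  ∀ v : V, v ∉ S → ∃ u ∈ S, G.Adj u v

/-- The resolving domination number η(G). -/
noncomputable def etaNum {V : Type*} (G : SimpleGraph V) : ℕ :=
  sInf {k | ∃ S : Set V, IsResolvingSet G S ∧ IsDominatingSet G S ∧ S.ncard = k}

/-- A twin set: pairwise twin vertices. -/
def IsTwinSet {V : Type*} (G : SimpleGraph V) (W : Set V) : Prop :=
  ∀ u ∈ W, ∀ v ∈ W, ∀ w : V, w ≠ u → w ≠ v → G.dist u w = G.dist v w

/-- The join of two graphs. -/
def gJoin {α β : Type*} (G : SimpleGraph α) (H : SimpleGraph β) : SimpleGraph (α ⊕ β) :=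
  SimpleGraph.fromRel (fun x y =>
    (∃ a b, x = Sum.inl a ∧ y = Sum.inl b ∧ G.Adj a b) ∨
    (∃ a b, x = Sum.inr a ∧ y = Sum.inr b ∧ H.Adj a b) ∨
    (∃ a b, x = Sum.inl a ∧ y = Sum.inr b))

/-- The disjoint union of two graphs. -/
def gUnion {α β : Type*} (G : SimpleGraph α) (H : SimpleGraph β) : SimpleGraph (α ⊕ β) :=
  SimpleGraph.fromRel (fun x y =>
    (∃ a b, x = Sum.inl a ∧ y = Sum.inl b ∧ G.Adj a b) ∨
    (∃ a b, x = Sum.inr a ∧ y = Sum.inr b ∧ H.Adj a b))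

set_option linter.unusedSectionVars false
set_option maxHeartbeats 1000000

section Helpers
variable {V : Type*} {G : SimpleGraph V} {v w : V} {S : Set V} {c : ℕ}

lemma pDist_le (h : w ∈ S) : pDist G v S ≤ G.dist v w :=
  Nat.sInf_le ⟨w, h, rfl⟩

lemma pDist_eq_zero_of_mem (h : v ∈ S) : pDist G v S = 0 :=
  Nat.eq_zero_of_le_zero ((pDist_le h).trans (by simp [SimpleGraph.dist_self]))

lemma pDist_pos (hG : G.Connected) (h : v ∉ S) (hS : S.Nonempty) : 0 < pDist G v S := by
  have hne : (G.dist v '' S).Nonempty := hS.image _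
  obtain ⟨s, hs, hds⟩ := Nat.sInf_mem hne
  rw [pDist, ← hds]
  exact hG.pos_dist_of_ne (fun hvs => h (hvs ▸ hs))

lemma pDist_eq_one (hG : G.Connected) (h : v ∉ S) (hw : w ∈ S) (hadj : G.Adj v w) :
    pDist G v S = 1 := by
  refine le_antisymm ((pDist_le hw).trans_eq (SimpleGraph.dist_eq_one_iff_adj.2 hadj)) ?_
  exact pDist_pos hG h ⟨w, hw⟩

lemma pDist_singleton : pDist G v {w} = G.dist v w := by
  simp [pDist]

lemma pDist_eq_of (hw : w ∈ S) (heq : G.dist v w = c)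
    (hlb : ∀ z ∈ S, c ≤ G.dist v z) : pDist G v S = c := by
  refine le_antisymm ((pDist_le hw).trans_eq heq) ?_
  obtain ⟨s, hs, hds⟩ := Nat.sInf_mem (Set.Nonempty.image (G.dist v) (⟨w, hw⟩ : S.Nonempty))
  rw [pDist, ← hds]
  exact hlb s hs

lemma Connected.exists_adj' (hG : G.Connected) (hcard : ∃ w, w ≠ v) : ∃ w, G.Adj v w := by
  obtain ⟨w, hw⟩ := hcard
  obtain ⟨p⟩ := hG v w
  cases p with
  | nil => exact absurd rfl (Ne.symm hw)
  | cons h q => exact ⟨_, h⟩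

end Helpers

section Pair

variable {V : Type*} [Fintype V] {G : SimpleGraph V} {k : ℕ} {a b : Fin k → V}

/-- The partition consisting of pairs `{a i, b i}` and singletons elsewhere. -/
def pairPart (a b : Fin k → V) : Set (Set V) :=
  (Set.range fun i => ({a i, b i} : Set V)) ∪
    ((fun v => ({v} : Set V)) '' (Set.range a ∪ Set.range b)ᶜ)

variable (ha : Function.Injective a) (hb : Function.Injective b)
  (hab : ∀ i j, a i ≠ b j)

include ha hb hab

lemma pair_mem_analysis {S : Set V} {v : V} (hS : S ∈ pairPart a b) (hv : v ∈ S) :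
    (∃ i, S = {a i, b i} ∧ (v = a i ∨ v = b i)) ∨
    (S = {v} ∧ ∀ i, v ≠ a i ∧ v ≠ b i) := by
  rcases hS with ⟨i, rfl⟩ | ⟨w, hw, rfl⟩
  · exact Or.inl ⟨i, rfl, hv⟩
  · rcases hv with rfl
    refine Or.inr ⟨rfl, fun i => ⟨?_, ?_⟩⟩
    · rintro rfl; exact hw (Or.inl ⟨i, rfl⟩)
    · rintro rfl; exact hw (Or.inr ⟨i, rfl⟩)

lemma pair_isPartition : Setoid.IsPartition (pairPart a b) := by
  constructor
  · rintro (⟨i, hi⟩ | ⟨w, hw, hweq⟩)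
    · refine absurd hi (fun h => ?_)
      have : a i ∈ (∅ : Set V) := h ▸ Set.mem_insert _ _
      exact this
    · exact absurd hweq (by simp)
  · intro v
    by_cases hv : v ∈ Set.range a ∪ Set.range b
    · have hvC : ∃ i, v = a i ∨ v = b i := by
        rcases hv with ⟨i, rfl⟩ | ⟨i, rfl⟩
        exacts [⟨i, Or.inl rfl⟩, ⟨i, Or.inr rfl⟩]
      obtain ⟨i, hi⟩ := hvC
      refine ⟨{a i, b i}, ⟨Or.inl ⟨i, rfl⟩, by rcases hi with h | h <;> simp [h]⟩, ?_⟩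
      rintro S ⟨hS, hvS⟩
      rcases pair_mem_analysis ha hb hab hS hvS with ⟨j, hSeq, hj⟩ | ⟨hSeq, hall⟩
      · have : j = i := by
          rcases hi with h1 | h1 <;> rcases hj with h2 | h2
          · exact ha (h2.symm.trans h1)
          · exact absurd (h1.symm.trans h2) (hab i j)
          · exact absurd (h2.symm.trans h1) (hab j i)
          · exact hb (h2.symm.trans h1)
        rw [hSeq, this]
      · rcases hi with h1 | h1
        · exact absurd h1 (hall i).1
        · exact absurd h1 (hall i).2
    · refine ⟨{v}, ⟨Or.inr ⟨v, hv, rfl⟩, rfl⟩, ?_⟩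
      rintro S ⟨hS, hvS⟩
      rcases pair_mem_analysis ha hb hab hS hvS with ⟨j, hSeq, hj⟩ | ⟨hSeq, _⟩
      · exact absurd (hj.elim (fun h => Or.inl ⟨j, h.symm⟩) (fun h => Or.inr ⟨j, h.symm⟩)) hv
      · exact hSeq

lemma pair_resolving (hG : G.Connected)
    (H1 : ∀ i, ∃ S ∈ pairPart a b, pDist G (a i) S ≠ pDist G (b i) S) :
    IsResolvingFam G (pairPart a b) := by
  intro x y hxy
  obtain ⟨S, ⟨hSP, hxS⟩, _⟩ := (pair_isPartition ha hb hab).2 x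
  by_cases hyS : y ∈ S
  · rcases pair_mem_analysis ha hb hab hSP hxS with ⟨i, hSeq, hxi⟩ | ⟨hSeq, _⟩
    · have hyi : y = a i ∨ y = b i := by
        rw [hSeq] at hyS; exact hyS
      obtain ⟨T, hTP, hT⟩ := H1 i
      rcases hxi with rfl | rfl <;> rcases hyi with h | h
      · exact absurd h.symm hxy
      · exact ⟨T, hTP, h ▸ hT⟩
      · exact ⟨T, hTP, h ▸ hT.symm⟩
      · exact absurd h.symm hxy
    · rw [hSeq] at hyS
      exact absurd hyS.symm hxy
  · refine ⟨S, hSP, ?_⟩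
    rw [pDist_eq_zero_of_mem hxS]
    exact (pDist_pos hG hyS ⟨x, hxS⟩).ne

lemma pair_dominating (hG : G.Connected)
    (H2 : ∀ v, ∃ w, G.Adj v w ∧ ∀ i, v ∈ ({a i, b i} : Set V) → w ∉ ({a i, b i} : Set V)) :
    IsDominatingFam G (pairPart a b) := by
  intro v
  obtain ⟨w, hadj, hw⟩ := H2 v
  obtain ⟨S, ⟨hSP, hwS⟩, _⟩ := (pair_isPartition ha hb hab).2 w
  have hvS : v ∉ S := by
    intro hvS
    rcases pair_mem_analysis ha hb hab hSP hvS with ⟨i, hSeq, _⟩ | ⟨hSeq, _⟩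
    · exact hw i (hSeq ▸ hvS) (hSeq ▸ hwS)
    · rw [hSeq] at hwS
      exact G.ne_of_adj hadj (Set.mem_singleton_iff.mp hwS).symm
  exact ⟨S, hSP, pDist_eq_one hG hvS hwS hadj⟩

lemma pair_ncard (hn : 2 * k ≤ Fintype.card V) :
    (pairPart a b).ncard = Fintype.card V - k := by
  classical
  have hC : Function.Injective (fun i => ({a i, b i} : Set V)) := by
    intro i j hij
    have hij' : ({a i, b i} : Set V) = {a j, b j} := hij
    have : a i ∈ ({a j, b j} : Set V) := hij' ▸ (Set.mem_insert _ _)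
    rcases this with h | h
    · exact ha h
    · exact absurd h (hab i j)
  have hdisj : Disjoint (Set.range fun i => ({a i, b i} : Set V))
      ((fun v => ({v} : Set V)) '' (Set.range a ∪ Set.range b)ᶜ) := by
    rw [Set.disjoint_left]
    rintro S ⟨i, rfl⟩ ⟨w, hw, hweq⟩
    have hweq' : ({w} : Set V) = {a i, b i} := hweq
    have h1 : a i ∈ ({w} : Set V) := hweq' ▸ (Set.mem_insert _ _)
    have h2 : b i ∈ ({w} : Set V) := hweq' ▸ (by simp : b i ∈ ({a i, b i} : Set V))
    exact hab i i ((Set.mem_singleton_iff.mp h1).trans (Set.mem_singleton_iff.mp h2).symm)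
  have hra : (Set.range a).ncard = k := by
    rw [← Set.image_univ, Set.ncard_image_of_injective _ ha, Set.ncard_univ,
      Nat.card_eq_fintype_card, Fintype.card_fin]
  have hrb : (Set.range b).ncard = k := by
    rw [← Set.image_univ, Set.ncard_image_of_injective _ hb, Set.ncard_univ,
      Nat.card_eq_fintype_card, Fintype.card_fin]
  have hrangeU : (Set.range a ∪ Set.range b).ncard = 2 * k := by
    rw [Set.ncard_union_eq (Set.disjoint_left.mpr
      (by rintro v ⟨i, rfl⟩ ⟨j, hj⟩; exact hab i j hj.symm))
      (Set.toFinite _) (Set.toFinite _), hra, hrb]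
    omega
  have hcompl : ((Set.range a ∪ Set.range b)ᶜ).ncard = Fintype.card V - 2 * k := by
    have := Set.ncard_add_ncard_compl (Set.range a ∪ Set.range b)
    rw [hrangeU, Nat.card_eq_fintype_card] at this
    omega
  have hrC : (Set.range fun i => ({a i, b i} : Set V)).ncard = k := by
    rw [← Set.image_univ, Set.ncard_image_of_injective _ hC, Set.ncard_univ,
      Nat.card_eq_fintype_card, Fintype.card_fin]
  rw [pairPart, Set.ncard_union_eq hdisj (Set.toFinite _) (Set.toFinite _),
    Set.ncard_image_of_injective _ Set.singleton_injective, hcompl, hrC]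
  omega

end Pair

section Matching
variable {V : Type*} [DecidableEq V]

lemma inj_into (X Y : Finset V) (h : Y.card ≤ X.card) :
    ∃ σ : V → V, Set.InjOn σ ↑Y ∧ ∀ y ∈ Y, σ y ∈ X := by
  obtain ⟨Z, hZX, hZcard⟩ := Finset.exists_subset_card_eq h
  have e := Finset.equivOfCardEq (hZcard.symm : Y.card = Z.card)
  classical
  refine ⟨fun v => if h : v ∈ Y then (e ⟨v, h⟩ : V) else v, ?_, ?_⟩
  · intro y1 h1 y2 h2 heq
    simp only [Finset.mem_coe] at h1 h2
    simp only [dif_pos h1, dif_pos h2] at heq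
    have := e.injective (Subtype.ext heq)
    exact congrArg Subtype.val this
  · intro y hy
    simp only [dif_pos hy]
    exact hZX (e ⟨y, hy⟩).2

lemma matching (F : V → Finset V) (hF : ∀ y, (F y).card ≤ 1) :
    ∀ (j : ℕ) (X Y : Finset V), Y.card = j → j ≤ X.card →
    (¬ ∃ x ∈ X, X.card = j ∧ ∀ y ∈ Y, F y = {x}) →
    ∃ σ : V → V, Set.InjOn σ ↑Y ∧ ∀ y ∈ Y, σ y ∈ X ∧ σ y ∉ F y := by
  intro j
  induction j with
  | zero =>
    intro X Y hY _ _
    rw [Finset.card_eq_zero] at hY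
    subst hY
    exact ⟨id, by simp, by simp⟩
  | succ j ih =>
    intro X Y hY hX H
    by_cases hA : ∃ x ∈ X, ∀ y ∈ Y, F y = {x}
    · obtain ⟨x₁, hx₁X, hx₁⟩ := hA
      have hXcard : j + 2 ≤ X.card := by
        rcases Nat.lt_or_ge (X.card) (j+2) with h | h
        · exact absurd ⟨x₁, hx₁X, by omega, hx₁⟩ H
        · exact h
      obtain ⟨σ, hinj, hmem⟩ := inj_into (X.erase x₁) Y
        (by rw [Finset.card_erase_of_mem hx₁X]; omega)
      refine ⟨σ, hinj, fun y hy => ?_⟩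
      have h := hmem y hy
      rw [Finset.mem_erase] at h
      exact ⟨h.2, by rw [hx₁ y hy]; simpa using h.1⟩
    · push_neg at hA
      have hYne : Y.Nonempty := Finset.card_pos.mp (by omega)
      obtain ⟨y₀, hy₀⟩ := hYne
      by_cases hsub : (X \ F y₀).Nonempty
      · obtain ⟨x₀, hx₀⟩ := hsub
        rw [Finset.mem_sdiff] at hx₀
        set Y' := Y.erase y₀ with hY'def
        set X' := X.erase x₀ with hX'def
        have hY'card : Y'.card = j := by rw [hY'def, Finset.card_erase_of_mem hy₀, hY]; omega
        have hX'card : j ≤ X'.card := by rw [hX'def, Finset.card_erase_of_mem hx₀.1]; omega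
        by_cases H' : ∃ x ∈ X', X'.card = j ∧ ∀ y ∈ Y', F y = {x}
        · -- rescue case
          obtain ⟨x₁, hx₁X', _, hx₁⟩ := H'
          have hx₁X : x₁ ∈ X := Finset.mem_of_mem_erase hx₁X'
          obtain ⟨ystar, hystarY, hystar⟩ := hA x₁ hx₁X
          have hystareq : ystar = y₀ := by
            by_contra hne
            exact hystar (hx₁ ystar (Finset.mem_erase.mpr ⟨hne, hystarY⟩))
          have hystar' : F y₀ ≠ {x₁} := hystareq ▸ hystar
          have hx₁F : x₁ ∉ F y₀ := by
            intro hmem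
            exact hystar' (Finset.eq_of_subset_of_card_le
              (Finset.singleton_subset_iff.mpr hmem) (by simpa using hF y₀)).symm
          obtain ⟨σ, hinj, hmem⟩ := inj_into (X.erase x₁) Y'
            (by rw [Finset.card_erase_of_mem hx₁X]; omega)
          refine ⟨Function.update σ y₀ x₁, ?_, ?_⟩
          · intro y1 h1 y2 h2 heq
            simp only [Finset.mem_coe] at h1 h2
            by_cases e1 : y1 = y₀ <;> by_cases e2 : y2 = y₀
            · rw [e1, e2]
            · exfalso
              rw [e1, Function.update_self, Function.update_of_ne e2] at heq
              have := hmem y2 (Finset.mem_erase.mpr ⟨e2, h2⟩)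
              rw [Finset.mem_erase] at this
              exact this.1 heq.symm
            · exfalso
              rw [e2, Function.update_self, Function.update_of_ne e1] at heq
              have := hmem y1 (Finset.mem_erase.mpr ⟨e1, h1⟩)
              rw [Finset.mem_erase] at this
              exact this.1 heq
            · rw [Function.update_of_ne e1, Function.update_of_ne e2] at heq
              exact hinj (Finset.mem_coe.mpr (Finset.mem_erase.mpr ⟨e1, h1⟩))
                (Finset.mem_coe.mpr (Finset.mem_erase.mpr ⟨e2, h2⟩)) heq
          · intro y hy
            by_cases ey : y = y₀
            · subst ey
              rw [Function.update_self]
              exact ⟨hx₁X, hx₁F⟩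
            · rw [Function.update_of_ne ey]
              have h := hmem y (Finset.mem_erase.mpr ⟨ey, hy⟩)
              rw [Finset.mem_erase] at h
              refine ⟨h.2, ?_⟩
              rw [hx₁ y (Finset.mem_erase.mpr ⟨ey, hy⟩)]
              simpa using h.1
        · obtain ⟨σ, hinj, hmem⟩ := ih X' Y' hY'card hX'card H'
          refine ⟨Function.update σ y₀ x₀, ?_, ?_⟩
          · intro y1 h1 y2 h2 heq
            simp only [Finset.mem_coe] at h1 h2
            by_cases e1 : y1 = y₀ <;> by_cases e2 : y2 = y₀
            · rw [e1, e2]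
            · exfalso
              rw [e1, Function.update_self, Function.update_of_ne e2] at heq
              have := (hmem y2 (Finset.mem_erase.mpr ⟨e2, h2⟩)).1
              rw [hX'def, Finset.mem_erase] at this
              exact this.1 heq.symm
            · exfalso
              rw [e2, Function.update_self, Function.update_of_ne e1] at heq
              have := (hmem y1 (Finset.mem_erase.mpr ⟨e1, h1⟩)).1
              rw [hX'def, Finset.mem_erase] at this
              exact this.1 heq
            · rw [Function.update_of_ne e1, Function.update_of_ne e2] at heq
              exact hinj (Finset.mem_coe.mpr (Finset.mem_erase.mpr ⟨e1, h1⟩))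
                (Finset.mem_coe.mpr (Finset.mem_erase.mpr ⟨e2, h2⟩)) heq
          · intro y hy
            by_cases ey : y = y₀
            · subst ey
              rw [Function.update_self]
              exact ⟨hx₀.1, hx₀.2⟩
            · rw [Function.update_of_ne ey]
              have h := hmem y (Finset.mem_erase.mpr ⟨ey, hy⟩)
              exact ⟨Finset.mem_of_mem_erase h.1, h.2⟩
      · -- degenerate case
        exfalso
        rw [Finset.not_nonempty_iff_eq_empty, Finset.sdiff_eq_empty_iff_subset] at hsub
        have hXcard : X.card ≤ 1 := le_trans (Finset.card_le_card hsub) (hF y₀)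
        have hj : j = 0 := by omega
        obtain ⟨x, hx⟩ := Finset.card_eq_one.mp (le_antisymm hXcard (by omega))
        subst hx
        obtain ⟨y, hyY, hy⟩ := hA x (Finset.mem_singleton_self x)
        have hyy₀ : y = y₀ := Finset.card_le_one.mp (by omega) y hyY y₀ hy₀
        have hFy : ({x} : Finset V) = F y₀ := Finset.eq_of_subset_of_card_le
          (Finset.singleton_subset_iff.mpr (hsub (Finset.mem_singleton_self x)))
          (by simpa using hF y₀)
        exact hy (hyy₀ ▸ hFy.symm)
end Matching

section Forb
variable {V : Type*} [Fintype V]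

open scoped Classical in
/-- Forbidden partner: the unique neighbor of a pendant vertex. -/
noncomputable def forb (G : SimpleGraph V) (y : V) : Finset V :=
  if (G.neighborSet y).toFinset.card = 1 then (G.neighborSet y).toFinset else ∅

variable {G : SimpleGraph V} {y z x : V}

lemma forb_card_le (G : SimpleGraph V) (y : V) : (forb G y).card ≤ 1 := by
  classical
  rw [forb]
  split <;> simp_all

lemma forb_eq_singleton (h : forb G y = {x}) : ∀ w, G.Adj y w ↔ w = x := by
  classical
  rw [forb] at h
  split at h
  · intro w
    rw [← SimpleGraph.mem_neighborSet, ← Set.mem_toFinset, h, Finset.mem_singleton]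
  · exact absurd h.symm (Finset.singleton_ne_empty x)

lemma exists_other_neighbor (hG : G.Connected) (h2 : ∃ w, w ≠ y)
    (hz : z ∉ forb G y) : ∃ w, G.Adj y w ∧ w ≠ z := by
  classical
  obtain ⟨w₀, hw₀⟩ := Connected.exists_adj' hG h2
  by_cases hc : (G.neighborSet y).toFinset.card = 1
  · refine ⟨w₀, hw₀, ?_⟩
    rintro rfl
    apply hz
    rw [forb]
    split
    · exact Set.mem_toFinset.mpr hw₀
    · omega
  · have hmem : w₀ ∈ (G.neighborSet y).toFinset := Set.mem_toFinset.mpr hw₀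
    have h1 : 1 < (G.neighborSet y).toFinset.card := by
      have := Finset.card_pos.mpr ⟨w₀, hmem⟩
      omega
    obtain ⟨u1, hu1, u2, hu2, hne⟩ := Finset.one_lt_card.mp h1
    by_cases h : u1 = z
    · exact ⟨u2, Set.mem_toFinset.mp hu2, by rintro rfl; exact hne h⟩
    · exact ⟨u1, Set.mem_toFinset.mp hu1, h⟩

end Forb

/-- enumeration of a finset of known cardinality -/
lemma Finset.exists_enum {V : Type*} {m : ℕ} (S : Finset V) (h : S.card = m) :
    ∃ f : Fin m → V, Function.Injective f ∧ ∀ i, f i ∈ S := by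
  have e := (S.equivFin.trans (finCongr h)).symm
  refine ⟨fun i => (e i : V), fun i j hij => e.injective (Subtype.ext hij), fun i => (e i).2⟩

theorem stmt_12 {V : Type*} [Fintype V] (G : SimpleGraph V) (hG : G.Connected)
    (k : ℕ) (hk : 2 ≤ k) (hn : 2 * k + 1 ≤ Fintype.card V)
    (u : V) (d : ℕ) (hd : (G.neighborSet u).ncard = d)
    (hkd : k ≤ d) (hdn : d ≤ Fintype.card V - k - 1) :
    etaP G ≤ Fintype.card V - k := by
  classical
  set n := Fintype.card V with hn_def
  have hVne : ∀ v : V, ∃ w, w ≠ v := fun v =>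
    Fintype.exists_ne_of_one_lt_card (by omega) v
  set A : Finset V := (G.neighborSet u).toFinset with hA_def
  have hAcard : A.card = d := by rw [hA_def, ← Set.ncard_eq_toFinset_card']; exact hd
  have hmemA : ∀ x, x ∈ A ↔ G.Adj u x := fun x => by
    rw [hA_def, Set.mem_toFinset]; rfl
  have huA : u ∉ A := fun h => G.irrefl ((hmemA u).mp h)
  set B : Finset V := Finset.univ \ insert u A with hB_def
  have hmemB : ∀ y, y ∈ B ↔ (y ≠ u ∧ y ∉ A) := by
    intro y
    rw [hB_def, Finset.mem_sdiff, Finset.mem_insert]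
    simp only [Finset.mem_univ, true_and, not_or]
  have hBcard : B.card = n - 1 - d := by
    rw [hB_def, Finset.card_sdiff_of_subset (Finset.subset_univ _),
      Finset.card_insert_of_notMem huA, hAcard, Finset.card_univ]
    omega
  have hdn' : d + k + 1 ≤ n := by omega
  have hBk : k ≤ B.card := by omega
  have hkA : k ≤ A.card := by omega
  -- key reduction via the pairing construction
  have key : ∀ a b : Fin k → V, Function.Injective a → Function.Injective b →
      (∀ i j, a i ≠ b j) →
      (∀ i, ∃ S ∈ pairPart a b, pDist G (a i) S ≠ pDist G (b i) S) →
      (∀ v, ∃ w, G.Adj v w ∧ ∀ i, v ∈ ({a i, b i} : Set V) → w ∉ ({a i, b i} : Set V)) →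
      etaP G ≤ n - k := by
    intro a b ha hb hab H1 H2
    refine Nat.sInf_le ⟨pairPart a b, pair_isPartition ha hb hab,
      pair_resolving ha hb hab hG H1, pair_dominating ha hb hab hG H2, ?_⟩
    rw [pair_ncard ha hb hab (by omega)]
  by_cases hGB : A.card = k ∧ ∃ xs ∈ A, ∀ y ∈ B, forb G y = {xs}
  · -- BAD CASE: degree k and all non-neighbors are pendants on a common neighbor xs
    obtain ⟨hAk, xs, hxsA, hxs⟩ := hGB
    obtain ⟨m, rfl⟩ : ∃ m, k = m + 1 := ⟨k - 1, by omega⟩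
    have hm1 : 1 ≤ m := by omega
    have hpend : ∀ y ∈ B, ∀ w, G.Adj y w ↔ w = xs := fun y hy =>
      forb_eq_singleton (hxs y hy)
    have hxsadj : G.Adj u xs := (hmemA _).mp hxsA
    have hBu : ∀ y ∈ B, y ≠ u := fun y hy => ((hmemB y).mp hy).1
    have hBA : ∀ y ∈ B, y ∉ A := fun y hy => ((hmemB y).mp hy).2
    have hdyu : ∀ y ∈ B, G.dist y u = 2 := by
      intro y hy
      have hne0 : G.dist y u ≠ 0 := fun h => hBu y hy (hG.dist_eq_zero_iff.mp h)
      have hne1 : G.dist y u ≠ 1 := fun h =>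
        hBA y hy ((hmemA y).mpr (SimpleGraph.dist_eq_one_iff_adj.mp h).symm)
      have hle : G.dist y u ≤ 2 := by
        have h1 : G.dist y xs = 1 := SimpleGraph.dist_eq_one_iff_adj.mpr
          ((hpend y hy xs).mpr rfl)
        have h2 : G.dist xs u = 1 := SimpleGraph.dist_eq_one_iff_adj.mpr hxsadj.symm
        calc G.dist y u ≤ G.dist y xs + G.dist xs u := hG.dist_triangle
          _ = 2 := by rw [h1, h2]
      omega
    have hdyy : ∀ y ∈ B, ∀ y' ∈ B, y ≠ y' → G.dist y y' = 2 := by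
      intro y hy y' hy' hne
      have hne0 : G.dist y y' ≠ 0 := fun h => hne (hG.dist_eq_zero_iff.mp h)
      have hne1 : G.dist y y' ≠ 1 := by
        intro h
        have hadj := SimpleGraph.dist_eq_one_iff_adj.mp h
        have : y' = xs := (hpend y hy y').mp hadj
        exact hBA y' hy' (this ▸ hxsA)
      have hle : G.dist y y' ≤ 2 := by
        have h1 : G.dist y xs = 1 := SimpleGraph.dist_eq_one_iff_adj.mpr
          ((hpend y hy xs).mpr rfl)
        have h2 : G.dist xs y' = 1 := SimpleGraph.dist_eq_one_iff_adj.mpr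
          (((hpend y' hy' xs).mpr rfl).symm)
        calc G.dist y y' ≤ G.dist y xs + G.dist xs y' := hG.dist_triangle
          _ = 2 := by rw [h1, h2]
      omega
    have hdyx : ∀ y ∈ B, ∀ x ∈ A, x ≠ xs → 2 ≤ G.dist y x := by
      intro y hy x hx hxne
      have hne0 : G.dist y x ≠ 0 := fun h =>
        hBA y hy ((hG.dist_eq_zero_iff.mp h) ▸ hx)
      have hne1 : G.dist y x ≠ 1 := fun h =>
        hxne ((hpend y hy x).mp (SimpleGraph.dist_eq_one_iff_adj.mp h))
      omega
    -- enumerations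
    have hAxscard : (A.erase xs).card = m := by
      rw [Finset.card_erase_of_mem hxsA, hAk]
      omega
    obtain ⟨q, hqinj, hqmem⟩ := Finset.exists_enum (A.erase xs) hAxscard
    obtain ⟨YB, hYBsub, hYBcard⟩ := Finset.exists_subset_card_eq hBk
    obtain ⟨p, hpinj, hpmemY⟩ := Finset.exists_enum YB hYBcard
    have hpB : ∀ i, p i ∈ B := fun i => hYBsub (hpmemY i)
    have hqA : ∀ i, q i ∈ A := fun i => Finset.mem_of_mem_erase (hqmem i)
    have hqxs : ∀ i, q i ≠ xs := fun i => (Finset.mem_erase.mp (hqmem i)).1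
    set a : Fin (m+1) → V := fun i =>
      if h : (i : ℕ) = 0 then u else q ⟨(i:ℕ) - 1, by have := i.isLt; omega⟩ with ha_def
    have ha_zero : ∀ i : Fin (m+1), (i : ℕ) = 0 → a i = u := by
      intro i h; simp only [ha_def, dif_pos h]
    have ha_succ : ∀ i : Fin (m+1), (h : (i : ℕ) ≠ 0) →
        a i = q ⟨(i:ℕ) - 1, by have := i.isLt; omega⟩ := by
      intro i h; simp only [ha_def, dif_neg h]
    have haA : ∀ i : Fin (m+1), (i : ℕ) ≠ 0 → (a i ∈ A ∧ a i ≠ xs) := by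
      intro i h
      rw [ha_succ i h]
      exact ⟨hqA _, hqxs _⟩
    have hauq : ∀ i : Fin (m+1), a i = u ∨ (a i ∈ A ∧ a i ≠ xs) := by
      intro i
      by_cases h : (i : ℕ) = 0
      · exact Or.inl (ha_zero i h)
      · exact Or.inr (haA i h)
    have huB : u ∉ B := fun h => hBu u h rfl
    have hainj : Function.Injective a := by
      intro i j hij
      by_cases hi : (i : ℕ) = 0 <;> by_cases hj : (j : ℕ) = 0
      · exact Fin.ext (by omega)
      · rw [ha_zero i hi, ha_succ j hj] at hij
        exact absurd (hij ▸ hqA _) huA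
      · rw [ha_zero j hj, ha_succ i hi] at hij
        exact absurd (hij.symm ▸ hqA _) huA
      · rw [ha_succ i hi, ha_succ j hj] at hij
        have hlt := i.isLt
        have hlt' := j.isLt
        have hsub : (i:ℕ) - 1 = (j:ℕ) - 1 := congrArg Fin.val (hqinj hij)
        exact Fin.ext (by omega)
    have habp : ∀ i j, a i ≠ p j := by
      intro i j h
      rcases hauq i with h' | ⟨h', _⟩
      · exact huB ((h'.symm.trans h).symm ▸ hpB j)
      · exact hBA _ (hpB j) (h ▸ h')
    -- apply key
    apply key a p hainj hpinj habp
    · -- H1 : resolving pairs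
      intro i
      by_cases hi : (i : ℕ) = 0
      · -- pair {u, p i}; distinguisher C 1 = {a i1, p i1}
        set i1 : Fin (m+1) := ⟨1, by omega⟩ with hi1
        have hi1ne : (i1 : ℕ) ≠ 0 := by simp [hi1]
        obtain ⟨hi1A, hi1xs⟩ := haA i1 hi1ne
        refine ⟨{a i1, p i1}, Or.inl ⟨i1, rfl⟩, ?_⟩
        have hd1 : pDist G (a i) {a i1, p i1} = 1 := by
          rw [ha_zero i hi]
          refine pDist_eq_of (Set.mem_insert _ _)
            (SimpleGraph.dist_eq_one_iff_adj.mpr ((hmemA _).mp hi1A)) ?_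
          rintro z (rfl | rfl)
          · exact (hG.pos_dist_of_ne (fun h => huA (h ▸ hi1A)))
          · exact (hG.pos_dist_of_ne (fun h => huB (h ▸ hpB i1)))
        have hd2 : pDist G (p i) {a i1, p i1} = 2 := by
          have hii1 : i ≠ i1 := fun h => hi1ne (h ▸ hi : ((i1:Fin (m+1)):ℕ) = 0)
          refine pDist_eq_of (Set.mem_insert_of_mem _ rfl)
            (hdyy _ (hpB i) _ (hpB i1) (fun h => hii1 (hpinj h))) ?_
          rintro z (rfl | rfl)
          · exact hdyx _ (hpB i) _ hi1A hi1xs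
          · exact (hdyy _ (hpB i) _ (hpB i1) (fun h => hii1 (hpinj h))).ge
        omega
      · -- pair {q _, p i}; distinguisher C 0 = {u, p 0}
        set i0 : Fin (m+1) := ⟨0, by omega⟩ with hi0
        refine ⟨{a i0, p i0}, Or.inl ⟨i0, rfl⟩, ?_⟩
        have hai0 : a i0 = u := ha_zero i0 rfl
        obtain ⟨haiA, haixs⟩ := haA i hi
        have hd1 : pDist G (a i) {a i0, p i0} = 1 := by
          rw [hai0]
          refine pDist_eq_of (Set.mem_insert _ _)
            (SimpleGraph.dist_eq_one_iff_adj.mpr ((hmemA _).mp haiA).symm) ?_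
          rintro z (rfl | rfl)
          · exact hG.pos_dist_of_ne (fun h => huA (h ▸ haiA))
          · exact hG.pos_dist_of_ne (fun h => hBA _ (hpB i0) (h ▸ haiA))
        have hd2 : pDist G (p i) {a i0, p i0} = 2 := by
          rw [hai0]
          have hii0 : i ≠ i0 := fun h => hi (h ▸ rfl : (i:ℕ) = (i0:ℕ))
          refine pDist_eq_of (Set.mem_insert _ _) (hdyu _ (hpB i)) ?_
          rintro z (rfl | rfl)
          · exact (hdyu _ (hpB i)).ge
          · exact (hdyy _ (hpB i) _ (hpB i0) (fun h => hii0 (hpinj h))).ge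
        omega
    · -- H2 : domination
      intro v
      have hxsnotin : ∀ j, xs ∉ ({a j, p j} : Set V) := by
        rintro j (h | h)
        · rcases hauq j with h' | ⟨_, h'⟩
          · exact G.ne_of_adj hxsadj (h'.symm ▸ h).symm
          · exact h' h.symm
        · exact hBA _ (hpB j) (h ▸ hxsA)
      by_cases hva : ∃ i, v = a i
      · obtain ⟨i, rfl⟩ := hva
        rcases hauq i with h' | ⟨h', _⟩
        · -- a i = u : use xs
          refine ⟨xs, h' ▸ hxsadj, fun j _ => hxsnotin j⟩
        · -- a i ∈ A : use u
          refine ⟨u, ((hmemA _).mp h').symm, fun j hj hu => ?_⟩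
          rcases hu with hu | hu
          · -- u = a j hence C j = {u, p j}; but a i ∈ C j with a i ∈ A
            rcases hj with hj | hj
            · exact huA ((hj.trans hu.symm) ▸ h')
            · exact hBA _ (hpB j) (hj ▸ h')
          · exact huB (hu ▸ hpB j)
      · by_cases hvb : ∃ i, v = p i
        · obtain ⟨i, rfl⟩ := hvb
          exact ⟨xs, (hpend _ (hpB i) xs).mpr rfl, fun j _ => hxsnotin j⟩
        · obtain ⟨w, hw⟩ := Connected.exists_adj' hG (hVne v)
          refine ⟨w, hw, fun j hj => absurd hj ?_⟩
          rintro (h | h)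
          · exact hva ⟨j, h⟩
          · exact hvb ⟨j, h⟩
  · -- GOOD CASE
    have hYex : ∃ Y : Finset V, Y ⊆ B ∧ Y.card = k ∧
        ¬∃ x ∈ A, A.card = k ∧ ∀ y ∈ Y, forb G y = {x} := by
      by_cases hAk : A.card = k
      · have hGB' : ∀ x ∈ A, ∃ y ∈ B, forb G y ≠ {x} := by
          intro x hx
          by_contra hcon
          push_neg at hcon
          exact hGB ⟨hAk, x, hx, hcon⟩
        choose g hg1 hg2 using fun (x : A) => hGB' x.1 x.2
        set W := Finset.univ.image (fun x : A => g x) with hW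
        have hWB : W ⊆ B := by
          intro y hy
          rw [hW, Finset.mem_image] at hy
          obtain ⟨x, _, rfl⟩ := hy
          exact hg1 x
        have hWcard : W.card ≤ k := le_trans Finset.card_image_le
          (by rw [Finset.card_univ, Fintype.card_coe, hAk])
        obtain ⟨Y, hWY, hYB, hYcard⟩ := Finset.exists_subsuperset_card_eq hWB hWcard hBk
        refine ⟨Y, hYB, hYcard, ?_⟩
        rintro ⟨x, hxA, -, hall⟩
        refine hg2 ⟨x, hxA⟩ (hall _ (hWY ?_))
        rw [hW, Finset.mem_image]
        exact ⟨⟨x, hxA⟩, Finset.mem_univ _, rfl⟩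
      · obtain ⟨Y, hYB, hYcard⟩ := Finset.exists_subset_card_eq hBk
        exact ⟨Y, hYB, hYcard, by rintro ⟨x, hxA, hcard, -⟩; exact hAk hcard⟩
    obtain ⟨Y, hYB, hYcard, HM⟩ := hYex
    obtain ⟨σ, hσinj, hσ⟩ := matching (forb G) (forb_card_le G) k A Y hYcard hkA HM
    obtain ⟨b, hbinj, hbY⟩ := Finset.exists_enum Y hYcard
    set a : Fin k → V := fun i => σ (b i) with ha_def
    have haA : ∀ i, a i ∈ A := fun i => (hσ _ (hbY i)).1
    have haF : ∀ i, a i ∉ forb G (b i) := fun i => (hσ _ (hbY i)).2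
    have hainj : Function.Injective a := fun i j hij =>
      hbinj (hσinj (Finset.mem_coe.mpr (hbY i)) (Finset.mem_coe.mpr (hbY j)) hij)
    have hbB : ∀ i, b i ∈ B := fun i => hYB (hbY i)
    have hbu : ∀ i, b i ≠ u := fun i => ((hmemB _).mp (hbB i)).1
    have hbA : ∀ i, b i ∉ A := fun i => ((hmemB _).mp (hbB i)).2
    have hab : ∀ i j, a i ≠ b j := fun i j h => hbA j (h ▸ haA i)
    have hua : ∀ i, u ≠ a i := fun i h => huA (h ▸ haA i)
    have huC : u ∈ (Set.range a ∪ Set.range b)ᶜ := by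
      simp only [Set.mem_compl_iff, Set.mem_union, Set.mem_range, not_or, not_exists]
      exact ⟨fun i h => huA (h ▸ haA i), fun i h => hbu i h⟩
    have hSu : ({u} : Set V) ∈ pairPart a b := Or.inr ⟨u, huC, rfl⟩
    apply key a b hainj hbinj hab
    · intro i
      refine ⟨{u}, hSu, ?_⟩
      rw [pDist_singleton, pDist_singleton]
      have h1 : G.dist (a i) u = 1 :=
        SimpleGraph.dist_eq_one_iff_adj.mpr ((hmemA _).mp (haA i)).symm
      have h2 : G.dist (b i) u ≠ 1 := fun h =>
        hbA i ((hmemA _).mpr (SimpleGraph.dist_eq_one_iff_adj.mp h).symm)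
      omega
    · intro v
      by_cases hva : ∃ i, v = a i
      · obtain ⟨i, rfl⟩ := hva
        refine ⟨u, ((hmemA _).mp (haA i)).symm, fun j _ hu => ?_⟩
        rcases hu with h | h
        · exact hua j h
        · exact hbu j h.symm
      · by_cases hvb : ∃ i, v = b i
        · obtain ⟨i, rfl⟩ := hvb
          obtain ⟨w, hw, hwne⟩ := exists_other_neighbor hG (hVne _) (haF i)
          refine ⟨w, hw, fun j hj hwj => ?_⟩
          have hji : j = i := by
            rcases hj with h | h
            · exact absurd h.symm (hab j i)
            · exact (hbinj h).symm
          subst hji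
          rcases hwj with h | h
          · exact hwne h
          · exact G.ne_of_adj hw h.symm
        · obtain ⟨w, hw⟩ := Connected.exists_adj' hG (hVne v)
          refine ⟨w, hw, fun j hj => absurd hj ?_⟩
          rintro (h | h)
          · exact hva ⟨j, h⟩
          · exact hvb ⟨j, h⟩
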